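/- Fix η > 0, R ≥ 0, T > 0 and ζ with ζ > η e^{RT}, and θ_r > 0. Define t₀ = T − (1/R) log[(ζ/η)(1 − 1/√(1+θ_r))] (assume R > 0 and (ζ/η)(1 − 1/√(1+θ_r)) > 1 so t₀ < T). Then for t ∈ [0, min(t₀,T)), the value u*(t) = 1 − (ζ/η)(1 − 1/√(1+θ_r)) e^{−R(T−t)} lies in (0,1) and satisfies (1+θ_r)(1/ζ) = ζ/(η(1−u*(t))e^{R(T−t)} − ζ)², i.e., the first-order condition (1+θ_r)E[Z] = E[Z e^{η(1−u)Z e^{R(T−t)}}] for Z ~ Exp(ζ). -/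

import Mathlib

open Real Set

/-
Writing `c = (ζ/η)(1 − 1/√(1+θ_r))`, the candidate is `u* = 1 − c e^{−R(T−t)}`, so
`η(1 − u*) e^{R(T−t)} = ζ(1 − 1/√(1+θ_r))` does not depend on `t`, and the first-order condition
collapses to `(1+θ_r)/ζ = ζ/(ζ/√(1+θ_r))²`. The constraint `t < t₀` is exactly `c < e^{R(T−t)}`,
which is what keeps `u*` positive.
-/

lemma one_sub_mul_exp_neg_mem_Ioo {c x : ℝ} (hc : 0 < c) (hx : log c < x) :
    1 - c * exp (-x) ∈ Ioo (0 : ℝ) 1 := by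
  constructor
  · rw [exp_neg, ← div_eq_mul_inv, sub_pos, div_lt_one (exp_pos x)]
    exact (log_lt_iff_lt_exp hc).mp hx
  · linarith [mul_pos hc (exp_pos (-x))]

lemma lt_mul_sub_of_lt_sub_one_div_mul {R T t a : ℝ} (hR : 0 < R) (ht : t < T - 1 / R * a) :
    a < R * (T - t) := by
  have h : 1 / R * a < T - t := by linarith
  rwa [one_div, inv_mul_lt_iff₀ hR] at h

lemma mul_one_sub_one_sub_mul_exp_neg_mul_exp {η ζ k : ℝ} (hη : η ≠ 0) (x : ℝ) :
    η * (1 - (1 - ζ / η * k * exp (-x))) * exp x = ζ * k := by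
  rw [exp_neg]
  field_simp [(exp_pos x).ne']
  ring

lemma one_add_mul_one_div_eq_div_sq {θ ζ : ℝ} (hθ : 0 < 1 + θ) (hζ : ζ ≠ 0) :
    (1 + θ) * (1 / ζ) = ζ / (ζ * (1 - 1 / sqrt (1 + θ)) - ζ) ^ 2 := by
  have hs : sqrt (1 + θ) ≠ 0 := (sqrt_pos.mpr hθ).ne'
  have hden : ζ * (1 - 1 / sqrt (1 + θ)) - ζ = -(ζ / sqrt (1 + θ)) := by ring
  rw [hden, neg_sq, div_pow, sq_sqrt hθ.le]
  field_simp

theorem optimal_retention_expected_value_exponential_general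
    (η R T θr ζ : ℝ)
    (hR : 0 < R) (hθ : 0 < θr)
    (hcoef : (ζ / η) * (1 - 1 / sqrt (1 + θr)) > 1) :
    let t₀ := T - (1 / R) * log ((ζ / η) * (1 - 1 / sqrt (1 + θr)))
    ∀ t ∈ Ico (0:ℝ) (min t₀ T),
      let ustar := 1 - (ζ / η) * (1 - 1 / sqrt (1 + θr)) * exp (-R * (T - t))
      ustar ∈ Ioo (0:ℝ) 1 ∧
      (1 + θr) * (1 / ζ) = ζ / (η * (1 - ustar) * exp (R * (T - t)) - ζ) ^ 2 := by
  intro t₀ t ht ustar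
  have hc : 0 < (ζ / η) * (1 - 1 / sqrt (1 + θr)) := one_pos.trans hcoef
  obtain ⟨hζ, hη⟩ := div_ne_zero_iff.mp (left_ne_zero_of_mul hc.ne')
  have hlog := lt_mul_sub_of_lt_sub_one_div_mul hR (ht.2.trans_le (min_le_left _ _))
  have hu : ustar = 1 - ζ / η * (1 - 1 / sqrt (1 + θr)) * exp (-(R * (T - t))) := by
    simp only [ustar, neg_mul]
  rw [hu, mul_one_sub_one_sub_mul_exp_neg_mul_exp hη]
  exact ⟨one_sub_mul_exp_neg_mem_Ioo hc hlog, one_add_mul_one_div_eq_div_sq (by linarith) hζ⟩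

/-- Expected value principle with exponential claims (formulas (4.13)–(4.14)):
for `t < t₀`, `u*(t) = 1 − (ζ/η)(1 − 1/√(1+θ_r)) e^{−R(T−t)}` lies in `(0,1)`
and satisfies the first-order condition
`(1+θ_r)/ζ = ζ/(η(1−u*)e^{R(T−t)} − ζ)²`. -/
theorem optimal_retention_expected_value_exponential
    (η R T θr ζ : ℝ)
    (hη : 0 < η) (hR : 0 < R) (hT : 0 < T) (hθ : 0 < θr)
    (hζ : ζ > η * exp (R * T))
    (hcoef : (ζ / η) * (1 - 1 / sqrt (1 + θr)) > 1) :
    let t₀ := T - (1 / R) * log ((ζ / η) * (1 - 1 / sqrt (1 + θr)))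
    ∀ t ∈ Ico (0:ℝ) (min t₀ T),
      let ustar := 1 - (ζ / η) * (1 - 1 / sqrt (1 + θr)) * exp (-R * (T - t))
      ustar ∈ Ioo (0:ℝ) 1 ∧
      (1 + θr) * (1 / ζ) = ζ / (η * (1 - ustar) * exp (R * (T - t)) - ζ) ^ 2 :=
  optimal_retention_expected_value_exponential_general η R T θr ζ hR hθ hcoef
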